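/- arXiv:2211.03899 — 6 statements merged into one kernel-verified Lean document; each statement's English description precedes it below -/
import Mathlib

section
/- Let γ ∈ [0,1), K ≥ 1, and w ∈ ℝ^K a nonnegative weight vector summing to one. Then ∑_{ℓ=0}^{K−1} ( ∑_{k=ℓ+1}^{K} w_k γ^k )^2 ≤ γ(1−γ̄)/(1−γ), where γ̄ = ∑_{k=1}^K w_k γ^k. -/
open Finset

/-!
Each tail sum `∑_{k>ℓ} wₖ γᵏ` lies in `[0, 1]`, so its square is at most itself. Exchanging the
order of summation turns the sum of the tails into `∑ₖ k wₖ γᵏ`, and `k γᵏ ≤ γ + γ² + ⋯ + γᵏ`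
`= γ (1 - γᵏ) / (1 - γ)`; averaging the last expression against `w` gives `γ (1 - γ̄) / (1 - γ)`.
-/

theorem Finset.sum_range_sum_Icc_succ_eq_sum_Icc_nsmul {M : Type*} [AddCommMonoid M]
    (f : ℕ → M) (K : ℕ) :
    ∑ ℓ ∈ range K, ∑ k ∈ Icc (ℓ + 1) K, f k = ∑ k ∈ Icc 1 K, k • f k := by
  rw [sum_comm' (t' := Icc 1 K) (s' := range) (by intro ℓ k; simp only [mem_range, mem_Icc]; omega)]
  simp only [sum_const, card_range]

theorem nat_mul_pow_mul_one_sub_le {γ : ℝ} (hγ0 : 0 ≤ γ) (hγ1 : γ ≤ 1) (k : ℕ) :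
    k * γ ^ k * (1 - γ) ≤ γ * (1 - γ ^ k) := by
  have hpow : (k : ℝ) * γ ^ k ≤ γ * ∑ i ∈ range k, γ ^ i := by
    calc (k : ℝ) * γ ^ k = ∑ _i ∈ range k, γ ^ k := by simp
      _ ≤ ∑ i ∈ range k, γ ^ (i + 1) := sum_le_sum fun i hi =>
          pow_le_pow_of_le_one hγ0 hγ1 (mem_range.mp hi)
      _ = γ * ∑ i ∈ range k, γ ^ i := by simp only [pow_succ', mul_sum]
  calc (k : ℝ) * γ ^ k * (1 - γ) ≤ γ * (∑ i ∈ range k, γ ^ i) * (1 - γ) :=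
        mul_le_mul_of_nonneg_right hpow (by linarith)
    _ = γ * (1 - γ ^ k) := by rw [mul_assoc, geom_sum_mul_neg]

section Weights

variable {s : Finset ℕ} {w : ℕ → ℝ} {γ : ℝ}

theorem sum_mul_pow_le_one (hγ0 : 0 ≤ γ) (hγ1 : γ ≤ 1) (hw0 : ∀ k ∈ s, 0 ≤ w k)
    (hw1 : ∑ k ∈ s, w k = 1) {t : Finset ℕ} (hts : t ⊆ s) :
    ∑ k ∈ t, w k * γ ^ k ≤ 1 :=
  calc ∑ k ∈ t, w k * γ ^ k ≤ ∑ k ∈ s, w k * γ ^ k :=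
        sum_le_sum_of_subset_of_nonneg hts fun k hk _ =>
          mul_nonneg (hw0 k hk) (pow_nonneg hγ0 k)
    _ ≤ ∑ k ∈ s, w k :=
        sum_le_sum fun k hk => mul_le_of_le_one_right (hw0 k hk) (pow_le_one₀ hγ0 hγ1)
    _ = 1 := hw1

theorem sum_nat_mul_mul_pow_mul_one_sub_le (hγ0 : 0 ≤ γ) (hγ1 : γ ≤ 1)
    (hw0 : ∀ k ∈ s, 0 ≤ w k) (hw1 : ∑ k ∈ s, w k = 1) :
    (∑ k ∈ s, k * (w k * γ ^ k)) * (1 - γ) ≤ γ * (1 - ∑ k ∈ s, w k * γ ^ k) :=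
  calc (∑ k ∈ s, k * (w k * γ ^ k)) * (1 - γ)
        = ∑ k ∈ s, w k * (k * γ ^ k * (1 - γ)) := by
          rw [sum_mul]; exact sum_congr rfl fun k _ => by ring
    _ ≤ ∑ k ∈ s, w k * (γ * (1 - γ ^ k)) := sum_le_sum fun k hk =>
          mul_le_mul_of_nonneg_left (nat_mul_pow_mul_one_sub_le hγ0 hγ1 k) (hw0 k hk)
    _ = γ * (∑ k ∈ s, w k - ∑ k ∈ s, w k * γ ^ k) := by
          rw [mul_sub, mul_sum, mul_sum, ← sum_sub_distrib]
          exact sum_congr rfl fun k _ => by ring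
    _ = γ * (1 - ∑ k ∈ s, w k * γ ^ k) := by rw [hw1]

end Weights

theorem stmt1_general (γ : ℝ) (hγ0 : 0 ≤ γ) (hγ1 : γ < 1) (K : ℕ)
    (w : ℕ → ℝ) (hw0 : ∀ k ∈ Icc 1 K, 0 ≤ w k) (hw1 : ∑ k ∈ Icc 1 K, w k = 1) :
    ∑ ℓ ∈ range K, (∑ k ∈ Icc (ℓ + 1) K, w k * γ ^ k) ^ 2
      ≤ γ * (1 - ∑ k ∈ Icc 1 K, w k * γ ^ k) / (1 - γ) := by
  have hTail : ∀ ℓ, 0 ≤ ∑ k ∈ Icc (ℓ + 1) K, w k * γ ^ k ∧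
      ∑ k ∈ Icc (ℓ + 1) K, w k * γ ^ k ≤ 1 := fun ℓ =>
    have hsub : Icc (ℓ + 1) K ⊆ Icc 1 K := Icc_subset_Icc (by omega) le_rfl
    ⟨sum_nonneg fun k hk => mul_nonneg (hw0 k (hsub hk)) (pow_nonneg hγ0 k),
      sum_mul_pow_le_one hγ0 hγ1.le hw0 hw1 hsub⟩
  calc ∑ ℓ ∈ range K, (∑ k ∈ Icc (ℓ + 1) K, w k * γ ^ k) ^ 2
      ≤ ∑ ℓ ∈ range K, ∑ k ∈ Icc (ℓ + 1) K, w k * γ ^ k :=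
        sum_le_sum fun ℓ _ => sq_le (hTail ℓ).1 (hTail ℓ).2
    _ = ∑ k ∈ Icc 1 K, k * (w k * γ ^ k) := by
        simp only [sum_range_sum_Icc_succ_eq_sum_Icc_nsmul, nsmul_eq_mul]
    _ ≤ γ * (1 - ∑ k ∈ Icc 1 K, w k * γ ^ k) / (1 - γ) := by
        rw [le_div_iff₀ (sub_pos.mpr hγ1)]
        exact sum_nat_mul_mul_pow_mul_one_sub_le hγ0 hγ1.le hw0 hw1

/-- `∑_{ℓ=0}^{K-1} (∑_{k=ℓ+1}^K wₖ γᵏ)² ≤ γ (1 - γ̄)/(1 - γ)` for a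
probability weight vector `w` and `γ ∈ [0,1)`, with `γ̄ = ∑ₖ wₖ γᵏ`. -/
theorem stmt1 (γ : ℝ) (hγ0 : 0 ≤ γ) (hγ1 : γ < 1) (K : ℕ) (hK : 1 ≤ K)
    (w : ℕ → ℝ) (hw0 : ∀ k ∈ Icc 1 K, 0 ≤ w k) (hw1 : ∑ k ∈ Icc 1 K, w k = 1) :
    ∑ ℓ ∈ range K, (∑ k ∈ Icc (ℓ + 1) K, w k * γ ^ k) ^ 2
      ≤ γ * (1 - ∑ k ∈ Icc 1 K, w k * γ ^ k) / (1 - γ) :=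
  stmt1_general γ hγ0 hγ1 K w hw0 hw1
end

section
/- Let P be a Markov operator on L²(μ) with μ stationary (so ‖P g‖_μ ≤ ‖g‖_μ for all g), and let H ⊆ L²(μ) be a closed subspace with orthogonal projection Π_H. Let T_w be a γ̄-contractive affine operator on L²(μ) (i.e., ‖T_w f − T_w g‖_μ ≤ γ̄ ‖f − g‖_μ with γ̄ ∈ [0,1)) with unique fixed point V*, and let θ* be the unique fixed point of Π_H ∘ T_w. Then ‖θ* − V*‖²_μ ≤ (1 − γ̄)^{−1} ‖Π_H V* − V*‖²_μ. -/
/-!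
The error `θ - V` splits orthogonally as `(θ - Π V) + (Π V - V)` since `θ ∈ H`, and
`θ - Π V = Π (T θ - T V)` has norm at most `γ̄ ‖θ - V‖` because `Π` is nonexpansive.
Pythagoras then gives `(1 - γ̄²) ‖θ - V‖² ≤ ‖Π V - V‖²`, and `1 - γ̄ ≤ 1 - γ̄²`.
-/

namespace Submodule

variable {𝕜 E : Type*} [RCLike 𝕜] [NormedAddCommGroup E] [InnerProductSpace 𝕜 E]
  (K : Submodule 𝕜 E) [K.HasOrthogonalProjection]

theorem norm_sub_sq_eq_norm_sub_starProjection_sq_add {x : E} (hx : x ∈ K) (v : E) :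
    ‖x - v‖ ^ 2 = ‖x - K.starProjection v‖ ^ 2 + ‖K.starProjection v - v‖ ^ 2 := by
  have horth : inner 𝕜 (x - K.starProjection v) (K.starProjection v - v) = 0 := by
    rw [inner_eq_zero_symm, ← neg_sub, inner_neg_left, neg_eq_zero]
    exact K.starProjection_inner_eq_zero v _ (K.sub_mem hx (K.starProjection_apply_mem v))
  simpa only [sq, sub_add_sub_cancel] using
    norm_add_sq_eq_norm_sq_add_norm_sq_of_inner_eq_zero _ _ horth

theorem norm_sub_starProjection_le_of_isFixedPt {T : E → E} {γ : ℝ}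
    (hT : ∀ f g : E, ‖T f - T g‖ ≤ γ * ‖f - g‖) {V θ : E} (hV : T V = V)
    (hθ : K.starProjection (T θ) = θ) :
    ‖θ - K.starProjection V‖ ≤ γ * ‖θ - V‖ :=
  calc ‖θ - K.starProjection V‖ = ‖K.starProjection (T θ - T V)‖ := by rw [map_sub, hθ, hV]
    _ ≤ ‖T θ - T V‖ := K.norm_starProjection_apply_le _
    _ ≤ γ * ‖θ - V‖ := hT θ V

end Submodule

theorem stmt4_general {E : Type*} [NormedAddCommGroup E] [InnerProductSpace ℝ E]
    (H : Submodule ℝ E) [CompleteSpace H]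
    (T : E → E) (γbar : ℝ) (h0 : 0 ≤ γbar) (h1 : γbar < 1)
    (hT : ∀ f g : E, ‖T f - T g‖ ≤ γbar * ‖f - g‖)
    (V θ : E) (hV : T V = V) (hθ : (H.orthogonalProjectionOnto (T θ) : E) = θ) :
    ‖θ - V‖ ^ 2 ≤ (1 - γbar)⁻¹ * ‖(H.orthogonalProjectionOnto V : E) - V‖ ^ 2 := by
  simp only [Submodule.coe_orthogonalProjectionOnto_apply] at hθ ⊢
  have hθH : θ ∈ H := hθ ▸ H.starProjection_apply_mem (T θ)
  have hpyth := H.norm_sub_sq_eq_norm_sub_starProjection_sq_add hθH V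
  have hcontr := H.norm_sub_starProjection_le_of_isFixedPt hT hV hθ
  have hsq : ‖θ - H.starProjection V‖ ^ 2 ≤ γbar * ‖θ - V‖ ^ 2 := by
    nlinarith [norm_nonneg (θ - H.starProjection V), norm_nonneg (θ - V)]
  rw [inv_mul_eq_div, le_div_iff₀ (sub_pos.2 h1)]
  linarith

/-- projected fixed point approximation bound. If `T` is a `γ̄`-contraction
on a Hilbert space with fixed point `V`, and `θ` is the fixed point of `Π_H ∘ T` for the
orthogonal projection `Π_H` onto a closed subspace `H`, then
`‖θ - V‖² ≤ (1 - γ̄)⁻¹ ‖Π_H V - V‖²`. -/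
theorem stmt4 {E : Type*} [NormedAddCommGroup E] [InnerProductSpace ℝ E] [CompleteSpace E]
    (H : Submodule ℝ E) [CompleteSpace H]
    (T : E → E) (γbar : ℝ) (h0 : 0 ≤ γbar) (h1 : γbar < 1)
    (hT : ∀ f g : E, ‖T f - T g‖ ≤ γbar * ‖f - g‖)
    (V θ : E) (hV : T V = V) (hθ : (H.orthogonalProjectionOnto (T θ) : E) = θ) :
    ‖θ - V‖ ^ 2 ≤ (1 - γbar)⁻¹ * ‖(H.orthogonalProjectionOnto V : E) - V‖ ^ 2 :=
  stmt4_general H T γbar h0 h1 hT V θ hV hθ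
end

section
/- Let P be a Markov kernel on X with stationary distribution μ, γ ∈ [0,1), K ≥ 1, and w a probability vector in ℝ^K. For f ∈ L²(μ) define Δσ(f) := ∑_{ℓ=0}^{K−1} ( ∑_{k=ℓ+1}^{K} w_k γ^k ) · sqrt( E_{X∼μ}[ Var( (P^ℓ f)(X') | X ) ] ). Then Δσ(f) ≤ sqrt( γ(1−γ̄)/(1−γ) ) · ‖f‖_μ, where γ̄ = ∑_k w_k γ^k. -/
/-!
The weight `∑_{k>ℓ} wₖ γᵏ` of the `ℓ`-th term is at most `γ^(ℓ+1)`, so the squared weights sum to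
at most `∑ₖ wₖ γᵏ ∑_{ℓ<k} γ^(ℓ+1) ≤ γ(1-γ̄)/(1-γ)`. Under a stationary `P`, the law of total
variance gives `E_μ[Var(Pˡf(X') | X)] = ‖Pˡf‖²_μ - ‖Pˡ⁺¹f‖²_μ`, so the variances telescope to at
most `‖f‖²_μ`. Cauchy–Schwarz over `ℓ` combines the two bounds.
-/

open MeasureTheory ProbabilityTheory Finset

noncomputable def kpow {X : Type*} [MeasurableSpace X] (P : Kernel X X) : ℕ → Kernel X X
  | 0 => Kernel.id
  | n + 1 => (kpow P n).comp P

/-- Action of the `n`-step kernel on a function: `(Pⁿ f)(x) = ∫ f dPⁿ(·|x)`. -/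
noncomputable def kact {X : Type*} [MeasurableSpace X] (P : Kernel X X) (n : ℕ)
    (f : X → ℝ) : X → ℝ :=
  fun x => ∫ y, f y ∂(kpow P n x)

lemma sq_integral_le_integral_sq {Ω : Type*} [MeasurableSpace Ω] {ν : Measure Ω}
    [IsProbabilityMeasure ν] {h : Ω → ℝ} (hh : MemLp h 2 ν) :
    (∫ y, h y ∂ν) ^ 2 ≤ ∫ y, h y ^ 2 ∂ν := by
  have hvar := variance_nonneg h ν
  rw [variance_eq_sub hh] at hvar
  simpa using hvar

lemma Real.sum_mul_sqrt_le_sqrt_mul_sqrt {ι : Type*} (s : Finset ι) (a v : ι → ℝ)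
    (hv : ∀ i ∈ s, 0 ≤ v i) :
    ∑ i ∈ s, a i * √(v i) ≤ √(∑ i ∈ s, a i ^ 2) * √(∑ i ∈ s, v i) := by
  calc ∑ i ∈ s, a i * √(v i) ≤ √(∑ i ∈ s, a i ^ 2) * √(∑ i ∈ s, √(v i) ^ 2) :=
        Real.sum_mul_le_sqrt_mul_sqrt s a _
    _ = √(∑ i ∈ s, a i ^ 2) * √(∑ i ∈ s, v i) := by
        rw [sum_congr rfl fun i hi => Real.sq_sqrt (hv i hi)]

namespace MeasureTheory.Measure

variable {α β : Type*} [MeasurableSpace α] [MeasurableSpace β] {μ : Measure α} {κ : Kernel α β}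
  {f : β → ℝ}

lemma integral_comp (hf : Integrable f (κ ∘ₘ μ)) :
    ∫ y, f y ∂(κ ∘ₘ μ) = ∫ x, ∫ y, f y ∂κ x ∂μ := by
  rw [comp_eq_comp_const_apply] at hf ⊢
  simpa using Kernel.integral_comp hf

lemma integrable_integral_comp (hf : Integrable f (κ ∘ₘ μ)) :
    Integrable (fun x => ∫ y, f y ∂κ x) μ := by
  rw [comp_eq_comp_const_apply] at hf
  simpa using hf.integral_comp

end MeasureTheory.Measure

/-- `E_{X∼μ}[Var(h(X') | X)]` for `X' ∼ κ(X)`. -/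
noncomputable def meanCondVar {X : Type*} [MeasurableSpace X] (μ : Measure X) (κ : Kernel X X)
    (h : X → ℝ) : ℝ :=
  ∫ x, ((∫ y, h y ^ 2 ∂κ x) - (∫ y, h y ∂κ x) ^ 2) ∂μ

section Stationary

variable {X : Type*} [MeasurableSpace X] {μ : Measure X} {κ : Kernel X X} {h : X → ℝ}

lemma integral_integral_of_comp_eq (hμ : κ ∘ₘ μ = μ) (hh : Integrable h μ) :
    ∫ x, ∫ y, h y ∂κ x ∂μ = ∫ y, h y ∂μ := by
  rw [← Measure.integral_comp (by rwa [hμ]), hμ]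

variable [IsFiniteMeasure μ]

lemma ae_memLp_two_of_comp_eq (hμ : κ ∘ₘ μ = μ) (hh : MemLp h 2 μ) :
    ∀ᵐ x ∂μ, MemLp h 2 (κ x) := by
  filter_upwards [Measure.ae_integrable_of_integrable_comp (hμ ▸ hh.integrable one_le_two),
    Measure.ae_integrable_of_integrable_comp (hμ ▸ hh.integrable_sq)] with x hx hx2
  exact (memLp_two_iff_integrable_sq hx.1).2 hx2

variable [IsMarkovKernel κ]

lemma memLp_two_integral_of_comp_eq (hμ : κ ∘ₘ μ = μ) (hh : MemLp h 2 μ) :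
    MemLp (fun x => ∫ y, h y ∂κ x) 2 μ := by
  have hint := Measure.integrable_integral_comp (hμ ▸ hh.integrable one_le_two)
  have hsq := Measure.integrable_integral_comp (hμ ▸ hh.integrable_sq)
  refine (memLp_two_iff_integrable_sq hint.1).2 (hsq.mono' (hint.1.pow 2) ?_)
  filter_upwards [ae_memLp_two_of_comp_eq hμ hh] with x hx
  rw [Real.norm_eq_abs, abs_sq]
  exact sq_integral_le_integral_sq hx

lemma meanCondVar_eq_of_comp_eq (hμ : κ ∘ₘ μ = μ) (hh : MemLp h 2 μ) :
    meanCondVar μ κ h = ∫ y, h y ^ 2 ∂μ - ∫ x, (∫ y, h y ∂κ x) ^ 2 ∂μ := by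
  have hsq : Integrable (fun x => ∫ y, h y ^ 2 ∂κ x) μ :=
    Measure.integrable_integral_comp (by rw [hμ]; exact hh.integrable_sq)
  rw [meanCondVar, integral_sub hsq (memLp_two_integral_of_comp_eq hμ hh).integrable_sq,
    integral_integral_of_comp_eq hμ hh.integrable_sq]

lemma meanCondVar_nonneg (hμ : κ ∘ₘ μ = μ) (hh : MemLp h 2 μ) : 0 ≤ meanCondVar μ κ h := by
  refine integral_nonneg_of_ae ?_
  filter_upwards [ae_memLp_two_of_comp_eq hμ hh] with x hx
  exact sub_nonneg.2 (sq_integral_le_integral_sq hx)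

end Stationary

section Iterates

variable {X : Type*} [MeasurableSpace X] {μ : Measure X} {P : Kernel X X} {f : X → ℝ}

instance (P : Kernel X X) [IsMarkovKernel P] (n : ℕ) : IsMarkovKernel (kpow P n) := by
  induction n with
  | zero => exact inferInstanceAs (IsMarkovKernel Kernel.id)
  | succ n ih => exact inferInstanceAs (IsMarkovKernel (kpow P n ∘ₖ P))

lemma comp_kpow_eq (hμ : P ∘ₘ μ = μ) (n : ℕ) : kpow P n ∘ₘ μ = μ := by
  induction n with
  | zero => exact Measure.id_comp
  | succ n ih => rw [kpow, ← Measure.comp_assoc, hμ, ih]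

lemma kact_zero (hf : Measurable f) : kact P 0 f = f :=
  funext fun x => by
    rw [kact, kpow, Kernel.id_apply, integral_dirac' f x hf.stronglyMeasurable]

lemma kact_succ_ae_eq (hμ : P ∘ₘ μ = μ) (hf : Integrable f μ) (n : ℕ) :
    kact P (n + 1) f =ᵐ[μ] fun x => ∫ y, kact P n f y ∂P x := by
  filter_upwards [Measure.ae_integrable_of_integrable_comp ((comp_kpow_eq hμ (n + 1)).symm ▸ hf)]
    with x hx
  exact Kernel.integral_comp hx

variable [IsFiniteMeasure μ] [IsMarkovKernel P]

lemma memLp_kact (hμ : P ∘ₘ μ = μ) (hf : Measurable f) (hf2 : MemLp f 2 μ) (n : ℕ) :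
    MemLp (kact P n f) 2 μ := by
  induction n with
  | zero => rwa [kact_zero hf]
  | succ n ih =>
    exact (memLp_two_integral_of_comp_eq hμ ih).ae_eq
      (kact_succ_ae_eq hμ (hf2.integrable one_le_two) n).symm

lemma sum_meanCondVar_kact_le (hμ : P ∘ₘ μ = μ) (hf : Measurable f) (hf2 : MemLp f 2 μ)
    (K : ℕ) : ∑ ℓ ∈ range K, meanCondVar μ P (kact P ℓ f) ≤ ∫ x, f x ^ 2 ∂μ := by
  have htel : ∀ ℓ, meanCondVar μ P (kact P ℓ f)
      = ∫ x, kact P ℓ f x ^ 2 ∂μ - ∫ x, kact P (ℓ + 1) f x ^ 2 ∂μ := fun ℓ => by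
    rw [meanCondVar_eq_of_comp_eq hμ (memLp_kact hμ hf hf2 ℓ)]
    congr 1
    exact integral_congr_ae
      ((kact_succ_ae_eq hμ (hf2.integrable one_le_two) ℓ).symm.fun_comp (· ^ 2))
  rw [sum_congr rfl fun ℓ _ => htel ℓ, sum_range_sub', kact_zero hf, sub_le_self_iff]
  exact integral_nonneg fun x => sq_nonneg _

end Iterates

section Weights

variable {γ : ℝ} {K : ℕ} {w : ℕ → ℝ}

lemma sum_Icc_mul_pow_le_pow (hγ0 : 0 ≤ γ) (hγ1 : γ ≤ 1) (hw0 : ∀ k ∈ Icc 1 K, 0 ≤ w k)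
    (hw1 : ∑ k ∈ Icc 1 K, w k = 1) (ℓ : ℕ) :
    ∑ k ∈ Icc (ℓ + 1) K, w k * γ ^ k ≤ γ ^ (ℓ + 1) := by
  have hsub : Icc (ℓ + 1) K ⊆ Icc 1 K := Icc_subset_Icc_left (Nat.le_add_left 1 ℓ)
  calc ∑ k ∈ Icc (ℓ + 1) K, w k * γ ^ k ≤ ∑ k ∈ Icc (ℓ + 1) K, w k * γ ^ (ℓ + 1) :=
        sum_le_sum fun k hk => mul_le_mul_of_nonneg_left
          (pow_le_pow_of_le_one hγ0 hγ1 (mem_Icc.1 hk).1) (hw0 k (hsub hk))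
    _ ≤ ∑ k ∈ Icc 1 K, w k * γ ^ (ℓ + 1) :=
        sum_le_sum_of_subset_of_nonneg hsub fun k hk _ =>
          mul_nonneg (hw0 k hk) (pow_nonneg hγ0 _)
    _ = γ ^ (ℓ + 1) := by rw [← sum_mul, hw1, one_mul]

lemma sum_sq_sum_Icc_mul_pow_le (hγ0 : 0 ≤ γ) (hγ1 : γ < 1) (hw0 : ∀ k ∈ Icc 1 K, 0 ≤ w k)
    (hw1 : ∑ k ∈ Icc 1 K, w k = 1) :
    ∑ ℓ ∈ range K, (∑ k ∈ Icc (ℓ + 1) K, w k * γ ^ k) ^ 2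
      ≤ γ * (1 - ∑ k ∈ Icc 1 K, w k * γ ^ k) / (1 - γ) := by
  have hswap : ∑ ℓ ∈ range K, γ ^ (ℓ + 1) * ∑ k ∈ Icc (ℓ + 1) K, w k * γ ^ k
      = ∑ k ∈ Icc 1 K, (∑ ℓ ∈ range k, γ ^ (ℓ + 1)) * (w k * γ ^ k) := by
    simp_rw [mul_sum, sum_mul]
    exact sum_comm' fun ℓ k => by simp only [mem_range, mem_Icc]; omega
  have hgeom (k : ℕ) : (∑ ℓ ∈ range k, γ ^ (ℓ + 1)) * (1 - γ) = γ * (1 - γ ^ k) := by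
    have hshift : ∑ ℓ ∈ range k, γ ^ (ℓ + 1) = γ * ∑ ℓ ∈ range k, γ ^ ℓ := by
      simp_rw [mul_sum, pow_succ']
    rw [hshift, mul_assoc, geom_sum_mul_neg]
  rw [le_div_iff₀ (sub_pos.2 hγ1)]
  calc (∑ ℓ ∈ range K, (∑ k ∈ Icc (ℓ + 1) K, w k * γ ^ k) ^ 2) * (1 - γ)
      ≤ (∑ ℓ ∈ range K, γ ^ (ℓ + 1) * ∑ k ∈ Icc (ℓ + 1) K, w k * γ ^ k) * (1 - γ) := by
        refine mul_le_mul_of_nonneg_right (sum_le_sum fun ℓ _ => ?_) (sub_nonneg.2 hγ1.le)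
        rw [sq]
        refine mul_le_mul_of_nonneg_right (sum_Icc_mul_pow_le_pow hγ0 hγ1.le hw0 hw1 ℓ) ?_
        exact sum_nonneg fun k hk => mul_nonneg
          (hw0 k (Icc_subset_Icc_left (Nat.le_add_left 1 ℓ) hk)) (pow_nonneg hγ0 k)
    _ = ∑ k ∈ Icc 1 K, w k * γ ^ k * (γ * (1 - γ ^ k)) := by
        rw [hswap, sum_mul]
        exact sum_congr rfl fun k _ => by rw [mul_right_comm, hgeom, mul_comm]
    _ ≤ ∑ k ∈ Icc 1 K, w k * (γ * (1 - γ ^ k)) := by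
        refine sum_le_sum fun k hk => mul_le_mul_of_nonneg_right ?_
          (mul_nonneg hγ0 (sub_nonneg.2 (pow_le_one₀ hγ0 hγ1.le)))
        exact mul_le_of_le_one_right (hw0 k hk) (pow_le_one₀ hγ0 hγ1.le)
    _ = γ * (∑ k ∈ Icc 1 K, w k - ∑ k ∈ Icc 1 K, w k * γ ^ k) := by
        rw [← sum_sub_distrib, mul_sum]
        exact sum_congr rfl fun k _ => by ring
    _ = γ * (1 - ∑ k ∈ Icc 1 K, w k * γ ^ k) := by rw [hw1]

end Weights

theorem stmt6_general {X : Type*} [MeasurableSpace X] (μ : Measure X) [IsProbabilityMeasure μ]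
    (P : Kernel X X) [IsMarkovKernel P] (hstat : μ.bind (fun x => P x) = μ)
    (γ : ℝ) (hγ0 : 0 ≤ γ) (hγ1 : γ < 1) (K : ℕ)
    (w : ℕ → ℝ) (hw0 : ∀ k ∈ Icc 1 K, 0 ≤ w k) (hw1 : ∑ k ∈ Icc 1 K, w k = 1)
    (f : X → ℝ) (hf : Measurable f) (hf2 : MemLp f 2 μ) :
    ∑ ℓ ∈ range K, (∑ k ∈ Icc (ℓ + 1) K, w k * γ ^ k) *
        Real.sqrt (∫ x,
          ((∫ y, (kact P ℓ f y) ^ 2 ∂(P x)) - (∫ y, kact P ℓ f y ∂(P x)) ^ 2) ∂μ)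
      ≤ Real.sqrt (γ * (1 - ∑ k ∈ Icc 1 K, w k * γ ^ k) / (1 - γ)) *
          Real.sqrt (∫ x, (f x) ^ 2 ∂μ) := by
  calc ∑ ℓ ∈ range K, (∑ k ∈ Icc (ℓ + 1) K, w k * γ ^ k) * √(meanCondVar μ P (kact P ℓ f))
      ≤ √(∑ ℓ ∈ range K, (∑ k ∈ Icc (ℓ + 1) K, w k * γ ^ k) ^ 2) *
          √(∑ ℓ ∈ range K, meanCondVar μ P (kact P ℓ f)) :=
        Real.sum_mul_sqrt_le_sqrt_mul_sqrt _ _ _ fun ℓ _ =>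
          meanCondVar_nonneg hstat (memLp_kact hstat hf hf2 ℓ)
    _ ≤ √(γ * (1 - ∑ k ∈ Icc 1 K, w k * γ ^ k) / (1 - γ)) * √(∫ x, f x ^ 2 ∂μ) := by
        gcongr
        · exact sum_sq_sum_Icc_mul_pow_le hγ0 hγ1 hw0 hw1
        · exact sum_meanCondVar_kact_le hstat hf hf2 K

/-- for a Markov kernel `P` with stationary distribution `μ`, `γ ∈ [0,1)`
and a probability weight vector `w`, the quantity
`Δσ(f) = ∑_{ℓ=0}^{K-1} (∑_{k=ℓ+1}^K wₖ γᵏ) √(E_μ[Var((Pˡf)(X')|X)])`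
is at most `√(γ(1-γ̄)/(1-γ)) ‖f‖_μ`. -/
theorem stmt6 {X : Type*} [MeasurableSpace X] (μ : Measure X) [IsProbabilityMeasure μ]
    (P : Kernel X X) [IsMarkovKernel P] (hstat : μ.bind (fun x => P x) = μ)
    (γ : ℝ) (hγ0 : 0 ≤ γ) (hγ1 : γ < 1) (K : ℕ) (hK : 1 ≤ K)
    (w : ℕ → ℝ) (hw0 : ∀ k ∈ Icc 1 K, 0 ≤ w k) (hw1 : ∑ k ∈ Icc 1 K, w k = 1)
    (f : X → ℝ) (hf : Measurable f) (hf2 : MemLp f 2 μ) :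
    ∑ ℓ ∈ range K, (∑ k ∈ Icc (ℓ + 1) K, w k * γ ^ k) *
        Real.sqrt (∫ x,
          ((∫ y, (kact P ℓ f y) ^ 2 ∂(P x)) - (∫ y, kact P ℓ f y ∂(P x)) ^ 2) ∂μ)
      ≤ Real.sqrt (γ * (1 - ∑ k ∈ Icc 1 K, w k * γ ^ k) / (1 - γ)) *
          Real.sqrt (∫ x, (f x) ^ 2 ∂μ) :=
  stmt6_general μ P hstat γ hγ0 hγ1 K w hw0 hw1 f hf hf2
end

section
/- Let P be a Markov kernel with stationary distribution μ satisfying the L²(μ)-geometric ergodicity condition ‖P f‖_μ ≤ (1 − 1/τ)‖f‖_μ for every f ∈ L²(μ) with μ(f) = 0, for some τ ≥ 1. Let V* = (I − γP)^{−1} r be the value function of a reward r ∈ L²(μ) with discount γ ∈ [0,1), and set V̄* := V* − (1−γ)^{−1} μ(r) · 1. If σ²(V*) := E_{X∼μ}[Var(V*(X')|X)], then σ²(V*) ≥ τ^{−1} ‖V̄*‖²_μ; consequently, for the projection error V⊥* := V* − Π_H V* onto any closed subspace H of L²(μ) containing the constant functions, ‖V⊥*‖_μ ≤ √τ · σ(V*).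 -/
/-!
Write `V̄ = V - c` with `c = (1 - γ)⁻¹ μ(r)`. Integrating the Bellman equation against the
stationary `μ` shows `μ(V) = c`, so `V̄` is centred. By stationarity, `E_μ[Var(V(X') | X)]` is
the gap `‖V̄‖² - ‖P V̄‖²` in the law of total variance, and the spectral gap bounds it below by
`(1 - (1 - 1/τ)²) ‖V̄‖² ≥ τ⁻¹ ‖V̄‖²`. Since `c • 𝟙 ∈ H`, the projection error is at most `‖V̄‖`.
-/

open MeasureTheory ProbabilityTheory

namespace ProbabilityTheory

section Stationary

variable {X E : Type*} [MeasurableSpace X] [NormedAddCommGroup E]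
  {μ : Measure X} {P : Kernel X X} {g : X → E}

lemma ae_integrable_kernel_of_comp_eq (h : P ∘ₘ μ = μ) (hg : Integrable g μ) :
    ∀ᵐ x ∂μ, Integrable g (P x) :=
  Measure.ae_integrable_of_integrable_comp (by rwa [h])

lemma integrable_integral_kernel_of_comp_eq [NormedSpace ℝ E] (h : P ∘ₘ μ = μ)
    (hg : Integrable g μ) :
    Integrable (fun x => ∫ y, g y ∂P x) μ := by
  rw [← h, Measure.comp_eq_comp_const_apply] at hg
  simpa using hg.integral_comp

lemma integral_integral_kernel_of_comp_eq [NormedSpace ℝ E] (h : P ∘ₘ μ = μ)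
    (hg : Integrable g μ) :
    ∫ x, ∫ y, g y ∂P x ∂μ = ∫ x, g x ∂μ := by
  conv_rhs => rw [← h, Measure.comp_eq_comp_const_apply]
  rw [← h, Measure.comp_eq_comp_const_apply] at hg
  simpa using (Kernel.integral_comp hg).symm

lemma ae_memLp_two_kernel_of_comp_eq [IsFiniteMeasure μ] (h : P ∘ₘ μ = μ) {f : X → ℝ}
    (hf : MemLp f 2 μ) :
    ∀ᵐ x ∂μ, MemLp f 2 (P x) := by
  filter_upwards [ae_integrable_kernel_of_comp_eq h (hf.integrable one_le_two),
    ae_integrable_kernel_of_comp_eq h hf.integrable_sq] with x hx hx2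
  exact (memLp_two_iff_integrable_sq hx.1).2 hx2

lemma integral_of_eq_add_mul_integral_kernel (h : P ∘ₘ μ = μ) {γ : ℝ} (hγ : γ ≠ 1)
    {r V : X → ℝ} (hV : Integrable V μ) (hfix : ∀ x, V x = r x + γ * ∫ y, V y ∂P x) :
    ∫ x, V x ∂μ = (1 - γ)⁻¹ * ∫ x, r x ∂μ := by
  have hPV := integrable_integral_kernel_of_comp_eq h hV
  have hr : r = fun x => V x - γ * ∫ y, V y ∂P x := by
    funext x; rw [hfix x]; ring
  rw [hr, integral_sub hV (hPV.const_mul γ), integral_const_mul,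
    integral_integral_kernel_of_comp_eq h hV]
  field_simp [sub_ne_zero.2 (Ne.symm hγ)]

end Stationary

lemma sq_integral_le_integral_sq {Ω : Type*} [MeasurableSpace Ω] {ν : Measure Ω}
    [IsProbabilityMeasure ν] {f : Ω → ℝ} (hf : MemLp f 2 ν) :
    (∫ ω, f ω ∂ν) ^ 2 ≤ ∫ ω, f ω ^ 2 ∂ν := by
  have hvar := variance_nonneg f ν
  rw [variance_eq_sub hf] at hvar
  simpa [sub_nonneg] using hvar

lemma integral_sq_sub_sq_integral_sub_const {Ω : Type*} [MeasurableSpace Ω] {ν : Measure Ω}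
    [IsProbabilityMeasure ν] {f : Ω → ℝ} (hf : MemLp f 2 ν) (c : ℝ) :
    ∫ ω, (f ω - c) ^ 2 ∂ν - (∫ ω, (f ω - c) ∂ν) ^ 2 = ∫ ω, f ω ^ 2 ∂ν - (∫ ω, f ω ∂ν) ^ 2 := by
  have h := variance_sub_const hf.aestronglyMeasurable c
  have hfc : MemLp (fun ω => f ω - c) 2 ν := hf.sub (memLp_const c)
  rw [variance_eq_sub hf, variance_eq_sub hfc] at h
  simpa using h

section Markov

variable {X : Type*} [MeasurableSpace X] {μ : Measure X} [IsProbabilityMeasure μ]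
  {P : Kernel X X} [IsMarkovKernel P]

lemma integral_integral_sq_sub_sq_integral_of_comp_eq (h : P ∘ₘ μ = μ) {f : X → ℝ}
    (hf : MemLp f 2 μ) :
    ∫ x, (∫ y, f y ^ 2 ∂P x - (∫ y, f y ∂P x) ^ 2) ∂μ
      = ∫ x, f x ^ 2 ∂μ - ∫ x, (∫ y, f y ∂P x) ^ 2 ∂μ := by
  have hPsq := integrable_integral_kernel_of_comp_eq h hf.integrable_sq
  have hjensen : ∀ᵐ x ∂μ, (∫ y, f y ∂P x) ^ 2 ≤ ∫ y, f y ^ 2 ∂P x := by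
    filter_upwards [ae_memLp_two_kernel_of_comp_eq h hf] with x hx
    exact sq_integral_le_integral_sq hx
  have hsqP : Integrable (fun x => (∫ y, f y ∂P x) ^ 2) μ := by
    refine hPsq.mono'
      ((integrable_integral_kernel_of_comp_eq h (hf.integrable one_le_two)).1.pow 2) ?_
    filter_upwards [hjensen] with x hx
    simpa using hx
  rw [integral_sub hPsq hsqP, integral_integral_kernel_of_comp_eq h hf.integrable_sq]

lemma integral_integral_sq_sub_sq_integral_of_comp_eq_sub_const (h : P ∘ₘ μ = μ) {f : X → ℝ}
    (hf : MemLp f 2 μ) (c : ℝ) :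
    ∫ x, (∫ y, f y ^ 2 ∂P x - (∫ y, f y ∂P x) ^ 2) ∂μ
      = ∫ x, (f x - c) ^ 2 ∂μ - ∫ x, (∫ y, (f y - c) ∂P x) ^ 2 ∂μ := by
  rw [← integral_integral_sq_sub_sq_integral_of_comp_eq (f := fun x => f x - c) h
    (hf.sub (memLp_const c))]
  refine integral_congr_ae ?_
  filter_upwards [ae_memLp_two_kernel_of_comp_eq h hf] with x hx
  exact (integral_sq_sub_sq_integral_sub_const hx c).symm

end Markov

end ProbabilityTheory

lemma inv_mul_le_sub_of_sqrt_le {A B τ : ℝ} (hA : 0 ≤ A) (hτ : 1 ≤ τ)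
    (h : √B ≤ (1 - 1 / τ) * √A) : τ⁻¹ * A ≤ A - B := by
  have hτ0 : 0 < τ := by linarith
  have hk : 0 ≤ 1 - 1 / τ := by
    rw [sub_nonneg, div_le_one hτ0]; exact hτ
  have hB : B ≤ (1 - 1 / τ) ^ 2 * A := by
    rcases le_or_gt B 0 with hB | hB
    · nlinarith
    · calc B = √B ^ 2 := (Real.sq_sqrt hB.le).symm
        _ ≤ ((1 - 1 / τ) * √A) ^ 2 := pow_le_pow_left₀ (Real.sqrt_nonneg B) h 2
        _ = (1 - 1 / τ) ^ 2 * A := by rw [mul_pow, Real.sq_sqrt hA]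
  have hgap : τ⁻¹ ≤ 1 - (1 - 1 / τ) ^ 2 := by
    have h1 : τ⁻¹ ≤ 1 := inv_le_one_of_one_le₀ hτ
    rw [one_div]; nlinarith [inv_nonneg.2 hτ0.le]
  nlinarith

lemma Submodule.norm_sub_starProjection_le {𝕜 E : Type*} [RCLike 𝕜] [NormedAddCommGroup E]
    [InnerProductSpace 𝕜 E] {K : Submodule 𝕜 E} [K.HasOrthogonalProjection] (u : E) {v : E}
    (hv : v ∈ K) : ‖u - K.starProjection u‖ ≤ ‖u - v‖ := by
  rw [Submodule.starProjection_minimal]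
  exact ciInf_le ⟨0, by rintro _ ⟨x, rfl⟩; exact norm_nonneg _⟩ (⟨v, hv⟩ : K)

lemma MeasureTheory.MemLp.norm_toLp_two_sq {X : Type*} [MeasurableSpace X] {μ : Measure X}
    {f : X → ℝ} (hf : MemLp f 2 μ) : ‖hf.toLp f‖ ^ 2 = ∫ x, f x ^ 2 ∂μ := by
  rw [← real_inner_self_eq_norm_sq, L2.inner_def]
  refine integral_congr_ae ?_
  filter_upwards [hf.coeFn_toLp] with x hx
  rw [hx, real_inner_self_eq_norm_sq, Real.norm_eq_abs, sq_abs]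

theorem stmt8_general {X : Type*} [MeasurableSpace X] (μ : Measure X) [IsProbabilityMeasure μ]
    (P : Kernel X X) [IsMarkovKernel P] (hstat : μ.bind (fun x => P x) = μ)
    (τ : ℝ) (hτ : 1 ≤ τ)
    (herg : ∀ f : X → ℝ, Measurable f → MemLp f 2 μ → (∫ x, f x ∂μ) = 0 →
      Real.sqrt (∫ x, (∫ y, f y ∂(P x)) ^ 2 ∂μ)
        ≤ (1 - 1 / τ) * Real.sqrt (∫ x, (f x) ^ 2 ∂μ))
    (γ : ℝ) (hγ1 : γ < 1)
    (r V : X → ℝ) (hV : Measurable V) (hV2 : MemLp V 2 μ)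
    (hfix : ∀ x, V x = r x + γ * ∫ y, V y ∂(P x)) :
    τ⁻¹ * ∫ x, (V x - (1 - γ)⁻¹ * ∫ z, r z ∂μ) ^ 2 ∂μ
      ≤ ∫ x, ((∫ y, (V y) ^ 2 ∂(P x)) - (∫ y, V y ∂(P x)) ^ 2) ∂μ
    ∧ ∀ (H : Submodule ℝ (Lp ℝ 2 μ)) [CompleteSpace H],
        (MemLp.toLp (fun _ => (1 : ℝ)) (memLp_const 1)) ∈ H →
        ‖hV2.toLp V - (Submodule.orthogonalProjectionOnto H (hV2.toLp V) : Lp ℝ 2 μ)‖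
          ≤ Real.sqrt τ *
              Real.sqrt (∫ x, ((∫ y, (V y) ^ 2 ∂(P x)) - (∫ y, V y ∂(P x)) ^ 2) ∂μ) := by
  have h : P ∘ₘ μ = μ := hstat
  set c := (1 - γ)⁻¹ * ∫ z, r z ∂μ
  set f : X → ℝ := fun x => V x - c
  have hf : MemLp f 2 μ := hV2.sub (memLp_const c)
  have hmean : ∫ x, f x ∂μ = 0 := by
    simp [f, integral_sub (hV2.integrable one_le_two) (integrable_const c),
      integral_of_eq_add_mul_integral_kernel h hγ1.ne (hV2.integrable one_le_two) hfix, c]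
  have hvar : τ⁻¹ * ∫ x, f x ^ 2 ∂μ
      ≤ ∫ x, ((∫ y, V y ^ 2 ∂P x) - (∫ y, V y ∂P x) ^ 2) ∂μ := by
    rw [integral_integral_sq_sub_sq_integral_of_comp_eq_sub_const h hV2 c]
    exact inv_mul_le_sub_of_sqrt_le (integral_nonneg fun _ => sq_nonneg _) hτ
      (herg f (hV.sub measurable_const) hf hmean)
  refine ⟨hvar, fun H _ h1 => ?_⟩
  have hfLp : hV2.toLp V - c • MemLp.toLp (fun _ => (1 : ℝ)) (memLp_const 1) = hf.toLp f := by
    rw [← MemLp.toLp_const_smul, ← MemLp.toLp_sub]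
    exact MemLp.toLp_congr _ _ (ae_of_all _ fun x => by simp [f])
  have hτ0 : 0 < τ := by linarith
  calc _ ≤ ‖hV2.toLp V - c • MemLp.toLp (fun _ => (1 : ℝ)) (memLp_const 1)‖ :=
        H.norm_sub_starProjection_le _ (H.smul_mem c h1)
    _ = √(∫ x, f x ^ 2 ∂μ) := by rw [hfLp, ← hf.norm_toLp_two_sq, Real.sqrt_sq (norm_nonneg _)]
    _ ≤ √(τ * ∫ x, ((∫ y, V y ^ 2 ∂P x) - (∫ y, V y ∂P x) ^ 2) ∂μ) := by
        gcongr
        exact (inv_mul_le_iff₀ hτ0).1 hvar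
    _ = _ := Real.sqrt_mul hτ0.le _

/-- if the Markov kernel `P` with stationary distribution `μ` is
`L²(μ)`-geometrically ergodic with rate `1 - 1/τ`, and `V = r + γ P V` is the value
function of reward `r`, then with `V̄ := V - (1-γ)⁻¹ μ(r) 𝟙` the conditional variance
`σ²(V) := E_μ[Var(V(X')|X)]` satisfies `σ²(V) ≥ τ⁻¹ ‖V̄‖²_μ`; consequently for any
closed subspace `H` of `L²(μ)` containing the constants, the projection error satisfies
`‖V - Π_H V‖ ≤ √τ σ(V)`. -/
theorem stmt8 {X : Type*} [MeasurableSpace X] (μ : Measure X) [IsProbabilityMeasure μ]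
    (P : Kernel X X) [IsMarkovKernel P] (hstat : μ.bind (fun x => P x) = μ)
    (τ : ℝ) (hτ : 1 ≤ τ)
    (herg : ∀ f : X → ℝ, Measurable f → MemLp f 2 μ → (∫ x, f x ∂μ) = 0 →
      Real.sqrt (∫ x, (∫ y, f y ∂(P x)) ^ 2 ∂μ)
        ≤ (1 - 1 / τ) * Real.sqrt (∫ x, (f x) ^ 2 ∂μ))
    (γ : ℝ) (hγ0 : 0 ≤ γ) (hγ1 : γ < 1)
    (r V : X → ℝ) (hr : Measurable r) (hV : Measurable V) (hV2 : MemLp V 2 μ)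
    (hfix : ∀ x, V x = r x + γ * ∫ y, V y ∂(P x)) :
    τ⁻¹ * ∫ x, (V x - (1 - γ)⁻¹ * ∫ z, r z ∂μ) ^ 2 ∂μ
      ≤ ∫ x, ((∫ y, (V y) ^ 2 ∂(P x)) - (∫ y, V y ∂(P x)) ^ 2) ∂μ
    ∧ ∀ (H : Submodule ℝ (Lp ℝ 2 μ)) [CompleteSpace H],
        (MemLp.toLp (fun _ => (1 : ℝ)) (memLp_const 1)) ∈ H →
        ‖hV2.toLp V - (Submodule.orthogonalProjectionOnto H (hV2.toLp V) : Lp ℝ 2 μ)‖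
          ≤ Real.sqrt τ *
              Real.sqrt (∫ x, ((∫ y, (V y) ^ 2 ∂(P x)) - (∫ y, V y ∂(P x)) ^ 2) ∂μ) :=
  stmt8_general μ P hstat τ hτ herg γ hγ1 r V hV hV2 hfix
end

section
/- Let P be a 3×3 transition matrix with stationary distribution μ, eigen decomposition P = U diag(1, 1−4s, 0) Uᵀ diag(μ) where the columns of U are orthonormal in L²(μ), and let r ∈ ℝ³ be a reward. Then for γ̃ ∈ [0,1), the value function V* = (I − γ̃P)^{−1} r equals U diag( (1−γ̃)^{−1}, (1 − γ̃ + 4γ̃s)^{−1}, 1 ) ω, where ω := Uᵀ diag(μ) r, and E_{X∼μ}[Var(V*(X')|X)] = ( (1 − (1−4s)²)/(1 − γ̃ + 4γ̃s)² ) ω(2)² + ω(3)², with X' ∼ P(·|X). -/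
open Finset Matrix

/-- for a 3×3 transition matrix `P = U diag(1, 1-4s, 0) Uᵀ diag(μ)` with
`U` orthonormal in `L²(μ)` and stationary distribution `μ`, the value function
`V = (I - γ̃P)⁻¹ r` equals `U diag((1-γ̃)⁻¹, (1-γ̃+4γ̃s)⁻¹, 1) ω` with
`ω = Uᵀ diag(μ) r`, and the expected conditional variance of `V` equals
`((1-(1-4s)²)/(1-γ̃+4γ̃s)²) ω₂² + ω₃²`. -/
theorem stmt15 (s γ : ℝ) (hs0 : 0 < s) (hs1 : s < 1 / 4) (hγ0 : 0 ≤ γ) (hγ1 : γ < 1)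
    (P U : Matrix (Fin 3) (Fin 3) ℝ) (μ : Fin 3 → ℝ)
    (hμ0 : ∀ i, 0 < μ i) (hμ1 : ∑ i, μ i = 1)
    (hstat : ∀ j, ∑ i, μ i * P i j = μ j)
    (hU : Uᵀ * Matrix.diagonal μ * U = 1)
    (hP : P = U * Matrix.diagonal ![1, 1 - 4*s, 0] * Uᵀ * Matrix.diagonal μ)
    (r ω V : Fin 3 → ℝ)
    (hω : ω = (Uᵀ * Matrix.diagonal μ).mulVec r)
    (hV : V = U.mulVec ![(1 - γ)⁻¹ * ω 0, (1 - γ + 4*γ*s)⁻¹ * ω 1, ω 2]) :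
    ((1 : Matrix (Fin 3) (Fin 3) ℝ) - γ • P).mulVec V = r
    ∧ ∑ x, μ x * ((∑ y, P x y * (V y) ^ 2) - (∑ y, P x y * V y) ^ 2)
        = ((1 - (1 - 4*s) ^ 2) / (1 - γ + 4*γ*s) ^ 2) * (ω 1) ^ 2 + (ω 2) ^ 2 := by
  have haγ : (0:ℝ) < 1 - γ + 4*γ*s := by nlinarith
  have h1γ : (1:ℝ) - γ ≠ 0 := by linarith
  set c : Fin 3 → ℝ := ![(1 - γ)⁻¹ * ω 0, (1 - γ + 4*γ*s)⁻¹ * ω 1, ω 2] with hc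
  set d : Fin 3 → ℝ := ![1, 1 - 4*s, 0] with hd
  set W : Matrix (Fin 3) (Fin 3) ℝ := Uᵀ * Matrix.diagonal μ with hW
  have hWU : W * U = 1 := hU
  have hUW : U * W = 1 := mul_eq_one_comm.mpr hWU
  have hr : U.mulVec ω = r := by
    rw [hω, Matrix.mulVec_mulVec, hUW, Matrix.one_mulVec]
  have hPV : P.mulVec V = U.mulVec (fun i => d i * c i) := by
    have hP' : P = (U * Matrix.diagonal d) * W := by
      rw [hP, Matrix.mul_assoc]
    rw [hP', hV, Matrix.mulVec_mulVec,
      Matrix.mul_assoc (U * Matrix.diagonal d) W U, hWU, mul_one,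
      ← Matrix.mulVec_mulVec]
    have hdc : Matrix.diagonal d *ᵥ c = fun i => d i * c i :=
      funext (Matrix.mulVec_diagonal d c)
    rw [hdc]
  have hcomp : c - γ • (fun i => d i * c i) = ω := by
    funext i
    fin_cases i <;>
      simp [hc, hd, Matrix.cons_val_zero, Matrix.cons_val_one] <;>
      field_simp <;> rw [div_eq_iff (by linarith)] <;> ring
  constructor
  · rw [Matrix.sub_mulVec, Matrix.one_mulVec, Matrix.smul_mulVec, hPV,
      ← Matrix.mulVec_smul, hV, ← Matrix.mulVec_sub, hcomp, hr]
  · -- quadratic form lemma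
    have key : ∀ v : Fin 3 → ℝ, ∑ x, μ x * (U.mulVec v x) ^ 2 = ∑ j, (v j) ^ 2 := by
      intro v
      have h1 : v ⬝ᵥ (Uᵀ * Matrix.diagonal μ * U).mulVec v = v ⬝ᵥ v := by
        rw [hU, Matrix.one_mulVec]
      rw [← Matrix.mulVec_mulVec, ← Matrix.mulVec_mulVec,
        Matrix.dotProduct_mulVec, Matrix.vecMul_transpose] at h1
      calc ∑ x, μ x * (U.mulVec v x) ^ 2
          = (U.mulVec v) ⬝ᵥ (Matrix.diagonal μ).mulVec (U.mulVec v) := by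
            unfold dotProduct
            refine Finset.sum_congr rfl fun x _ => ?_
            rw [Matrix.mulVec_diagonal]; ring
        _ = v ⬝ᵥ v := h1
        _ = ∑ j, (v j) ^ 2 := by
            unfold dotProduct
            exact Finset.sum_congr rfl fun j _ => (sq (v j)).symm
    have hterm1 : ∑ x, μ x * (∑ y, P x y * (V y) ^ 2) = ∑ j, (c j) ^ 2 := by
      have e1 : ∑ x, μ x * (∑ y, P x y * (V y) ^ 2)
          = ∑ y, (∑ x, μ x * P x y) * (V y) ^ 2 := by
        simp_rw [Finset.mul_sum, Finset.sum_mul]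
        rw [Finset.sum_comm]
        exact Finset.sum_congr rfl fun y _ => Finset.sum_congr rfl fun x _ => by ring
      rw [e1]
      simp_rw [hstat]
      rw [hV]
      exact key c
    have hterm2 : ∑ x, μ x * (∑ y, P x y * V y) ^ 2 = ∑ j, (d j * c j) ^ 2 := by
      have e2 : ∀ x, ∑ y, P x y * V y = P.mulVec V x := fun x => rfl
      simp_rw [e2, hPV]
      exact key _
    have split : ∑ x, μ x * ((∑ y, P x y * (V y) ^ 2) - (∑ y, P x y * V y) ^ 2)
        = (∑ x, μ x * (∑ y, P x y * (V y) ^ 2)) - ∑ x, μ x * (∑ y, P x y * V y) ^ 2 := by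
      rw [← Finset.sum_sub_distrib]
      exact Finset.sum_congr rfl fun x _ => by ring
    rw [split, hterm1, hterm2, Fin.sum_univ_three, Fin.sum_univ_three]
    simp only [hc, hd, Matrix.cons_val_zero, Matrix.cons_val_one, Matrix.head_cons,
      Matrix.cons_val_two, Matrix.tail_cons]
    field_simp
    ring
end

section
/- Let V* be the fixed point of a weighted Bellman operator T_w(f) = L f + b, where L = ∑_{k=1}^K w_k γ^k P^k is a bounded linear operator on L²(μ) with ‖L‖_{op} ≤ γ̄ < 1, and let θ* = Π_H T_w(θ*) be the projected fixed point onto a closed subspace H. With V⊥* := V* − Π_H V*, the Bellman residual satisfies T_w(θ*) − θ* = S(V⊥*) where S := (Π⊥ (I − L)^{−1} Π⊥)^{−1} on H⊥; consequently ‖T_w(θ*) − θ*‖_μ ≤ 2 ‖V⊥*‖_μ. -/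
/-!
Write `r := L θ + b - θ` for the Bellman residual. Since `θ` is the projection of `L θ + b`,
`r ⊥ H`, and since `V = L V + b`, the error `x := V - θ` solves `(1 - L) x = r`; hence
`A r = x`, and projecting onto `Hᗮ` kills `θ ∈ H`, which gives the Schur-complement identity.
For the bound, `r ⊥ H` means `L x` and `x` have the same component in `H`; as `‖L x‖ ≤ ‖x‖`,
Pythagoras forces `‖Π⊥ (L x)‖ ≤ ‖Π⊥ x‖`, so `‖r‖ = ‖Π⊥ x - Π⊥ (L x)‖ ≤ 2 ‖Π⊥ x‖`.
-/

namespace Submodule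

variable {E : Type*} [NormedAddCommGroup E] [InnerProductSpace ℝ E]
  {K : Submodule ℝ E} [K.HasOrthogonalProjection]

theorem norm_starProjection_orthogonal_le_of_starProjection_eq {x y : E}
    (hP : K.starProjection y = K.starProjection x) (hyx : ‖y‖ ≤ ‖x‖) :
    ‖Kᗮ.starProjection y‖ ≤ ‖Kᗮ.starProjection x‖ := by
  have hsq : ‖Kᗮ.starProjection y‖ ^ 2 ≤ ‖Kᗮ.starProjection x‖ ^ 2 := by
    have := pow_le_pow_left₀ (norm_nonneg y) hyx 2
    rw [K.norm_sq_eq_add_norm_sq_starProjection y, K.norm_sq_eq_add_norm_sq_starProjection x,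
      hP] at this
    linarith
  exact le_of_pow_le_pow_left₀ two_ne_zero (norm_nonneg _) hsq

theorem norm_sub_apply_le_two_mul_norm_starProjection_orthogonal (L : E →L[ℝ] E) (hL : ‖L‖ ≤ 1)
    {x : E} (hx : x - L x ∈ Kᗮ) :
    ‖x - L x‖ ≤ 2 * ‖Kᗮ.starProjection x‖ := by
  have hP : K.starProjection (L x) = K.starProjection x := by
    rw [← sub_eq_zero, ← map_sub, ← neg_sub, map_neg, (starProjection_apply_eq_zero_iff K).mpr hx,
      neg_zero]
  have hLx : ‖Kᗮ.starProjection (L x)‖ ≤ ‖Kᗮ.starProjection x‖ :=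
    norm_starProjection_orthogonal_le_of_starProjection_eq hP (by simpa using L.le_of_opNorm_le hL x)
  calc ‖x - L x‖ = ‖Kᗮ.starProjection x - Kᗮ.starProjection (L x)‖ := by
        rw [← map_sub, starProjection_eq_self_iff.mpr hx]
    _ ≤ ‖Kᗮ.starProjection x‖ + ‖Kᗮ.starProjection (L x)‖ := norm_sub_le _ _
    _ ≤ 2 * ‖Kᗮ.starProjection x‖ := by linarith

end Submodule

open Submodule in
theorem stmt19_general {E : Type*} [NormedAddCommGroup E] [InnerProductSpace ℝ E]
    (H : Submodule ℝ E) [CompleteSpace H]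
    (L : E →L[ℝ] E) (b : E) (γbar : ℝ) (hL : ‖L‖ ≤ γbar) (h1 : γbar < 1)
    (A : E →L[ℝ] E) (hA2 : A * (1 - L) = 1)
    (V θ : E) (hV : L V + b = V)
    (hθ : (H.orthogonalProjectionOnto (L θ + b) : E) = θ) :
    ((1 - H.subtypeL.comp (H.orthogonalProjectionOnto))
        (A ((1 - H.subtypeL.comp (H.orthogonalProjectionOnto)) (L θ + b - θ))))
      = V - (H.orthogonalProjectionOnto V : E)
    ∧ ‖L θ + b - θ‖ ≤ 2 * ‖V - (H.orthogonalProjectionOnto V : E)‖ := by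
  change (1 - H.starProjection) (A ((1 - H.starProjection) _)) = V - H.starProjection V
    ∧ _ ≤ 2 * ‖V - H.starProjection V‖
  rw [← starProjection_orthogonal', ← starProjection_orthogonal_val]
  have hθH : θ ∈ H := hθ ▸ coe_mem _
  have hres : L θ + b - θ = (V - θ) - L (V - θ) := by
    rw [map_sub, eq_sub_of_add_eq' hV]
    abel
  have hresOrth : L θ + b - θ ∈ Hᗮ := by
    simpa only [starProjection_apply, hθ] using H.sub_starProjection_mem_orthogonal (L θ + b)
  have hAres : A (L θ + b - θ) = V - θ := by
    simpa only [hres, mul_apply_eq_comp, sub_apply, one_apply_eq_self]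
      using DFunLike.congr_fun hA2 (V - θ)
  have hθ_orth : Hᗮ.starProjection θ = 0 :=
    (starProjection_apply_eq_zero_iff _).mpr (H.le_orthogonal_orthogonal hθH)
  have hVθ : Hᗮ.starProjection (V - θ) = Hᗮ.starProjection V := by
    rw [map_sub, hθ_orth, sub_zero]
  refine ⟨?_, ?_⟩
  · rw [starProjection_eq_self_iff.mpr hresOrth, hAres, hVθ]
  · rw [hres, ← hVθ]
    exact norm_sub_apply_le_two_mul_norm_starProjection_orthogonal L (hL.trans h1.le)
      (hres ▸ hresOrth)

/-- for a weighted Bellman operator `T f = L f + b` with `‖L‖ ≤ γ̄ < 1`,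
fixed point `V` and projected fixed point `θ = Π_H (L θ + b)`, the Bellman residual
satisfies `T θ - θ = S (V - Π_H V)` where `S = (Π⊥ (I-L)⁻¹ Π⊥)⁻¹` on `H⊥`
(expressed here as `Π⊥ (I-L)⁻¹ Π⊥ (Tθ - θ) = V - Π_H V`), and consequently
`‖T θ - θ‖ ≤ 2 ‖V - Π_H V‖`. -/
theorem stmt19 {E : Type*} [NormedAddCommGroup E] [InnerProductSpace ℝ E] [CompleteSpace E]
    (H : Submodule ℝ E) [CompleteSpace H]
    (L : E →L[ℝ] E) (b : E) (γbar : ℝ) (hL : ‖L‖ ≤ γbar) (h0 : 0 ≤ γbar) (h1 : γbar < 1)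
    (A : E →L[ℝ] E) (hA1 : (1 - L) * A = 1) (hA2 : A * (1 - L) = 1)
    (V θ : E) (hV : L V + b = V)
    (hθ : (H.orthogonalProjectionOnto (L θ + b) : E) = θ) :
    ((1 - H.subtypeL.comp (H.orthogonalProjectionOnto))
        (A ((1 - H.subtypeL.comp (H.orthogonalProjectionOnto)) (L θ + b - θ))))
      = V - (H.orthogonalProjectionOnto V : E)
    ∧ ‖L θ + b - θ‖ ≤ 2 * ‖V - (H.orthogonalProjectionOnto V : E)‖ :=
  stmt19_general H L b γbar hL h1 A hA2 V θ hV hθ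
end
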